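/- arXiv:2207.09891 — 6 statements merged into one kernel-verified Lean document; each statement's English description precedes it below -/
import Mathlib

section
/- Let Ψ ⊆ ℝ^p be a parameter set. For each ψ ∈ Ψ let f_ψ : ℝ^m → [0,∞) be measurable with marginal likelihood 0 < L(ψ) := ∫_{ℝ^m} f_ψ(y) dy < ∞, and let p_ψ := f_ψ / L(ψ) be the predictive density. Let ỹ : Ψ → ℝ^m, and for each ψ let g_ψ : ℝ^m → ℝ^m be a bijective map that is differentiable at ỹ(ψ) with invertible derivative. If there exists a constant κ > 0, independent of ψ, such that |det Dg_ψ(ỹ(ψ))| = κ · p_ψ(ỹ(ψ)) for every ψ ∈ Ψ, then for every ψ ∈ Ψ one has f_ψ(ỹ(ψ)) · |det Dg_ψ(ỹ(ψ))|⁻¹ = L(ψ)/κ; in particular, the transformed (v-scale) extended likelihood evaluated at the transformed mode is proportional to the marginal likelihood L(ψ) with proportionality constant independent of ψ. -/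
open MeasureTheory

/-- Proposition 3.1: if the absolute Jacobian determinant of the scale
transformation `g ψ` at the mode `ỹ ψ` is proportional (with constant `κ`
independent of `ψ`) to the predictive density at the mode, then the
transformed extended likelihood at the mode is proportional to the marginal
likelihood `L ψ`, with proportionality constant `κ⁻¹` independent of `ψ`. -/
theorem prop_canonical_scale {p m : ℕ} (Ψ : Set (Fin p → ℝ))
    (f : (Fin p → ℝ) → (Fin m → ℝ) → ℝ)
    (hf_nonneg : ∀ ψ ∈ Ψ, ∀ y, 0 ≤ f ψ y)
    (hf_meas : ∀ ψ ∈ Ψ, Measurable (f ψ))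
    (hf_int : ∀ ψ ∈ Ψ, Integrable (f ψ))
    (L : (Fin p → ℝ) → ℝ)
    (hL : ∀ ψ ∈ Ψ, L ψ = ∫ y, f ψ y)
    (hL_pos : ∀ ψ ∈ Ψ, 0 < L ψ)
    (pd : (Fin p → ℝ) → (Fin m → ℝ) → ℝ)
    (hpd : ∀ ψ ∈ Ψ, ∀ y, pd ψ y = f ψ y / L ψ)
    (ytil : (Fin p → ℝ) → (Fin m → ℝ))
    (g : (Fin p → ℝ) → (Fin m → ℝ) → (Fin m → ℝ))
    (Dg : (Fin p → ℝ) → ((Fin m → ℝ) →L[ℝ] (Fin m → ℝ)))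
    (hg_bij : ∀ ψ ∈ Ψ, Function.Bijective (g ψ))
    (hg_diff : ∀ ψ ∈ Ψ, HasFDerivAt (g ψ) (Dg ψ) (ytil ψ))
    (hg_inv : ∀ ψ ∈ Ψ, (Dg ψ).det ≠ 0)
    (κ : ℝ) (hκ : 0 < κ)
    (hcanon : ∀ ψ ∈ Ψ, |(Dg ψ).det| = κ * pd ψ (ytil ψ)) :
    ∀ ψ ∈ Ψ, f ψ (ytil ψ) * |(Dg ψ).det|⁻¹ = L ψ / κ := by
  intro ψ hψ
  have hLpos := hL_pos ψ hψ
  have hdet : |(Dg ψ).det| ≠ 0 := abs_ne_zero.mpr (hg_inv ψ hψ)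
  have heq : |(Dg ψ).det| = κ * (f ψ (ytil ψ) / L ψ) := by
    rw [hcanon ψ hψ, hpd ψ hψ]
  rw [heq]
  have hfne : f ψ (ytil ψ) ≠ 0 := by
    intro h0
    apply hdet
    rw [heq, h0]
    simp
  field_simp
end

section
/- Let Ψ ⊆ ℝ^p. For each ψ ∈ Ψ let f_ψ : ℝ^m → [0,∞) be measurable with 0 < L(ψ) := ∫_{ℝ^m} f_ψ(y) dy < ∞ and predictive density p_ψ := f_ψ / L(ψ). Assume p_ψ is unimodal: there is ỹ(ψ) ∈ ℝ^m which is the unique global maximizer of p_ψ, with p_ψ(ỹ(ψ)) > 0. Define the linear map g_ψ : ℝ^m → ℝ^m by g_ψ(y) = (p_ψ(ỹ(ψ)))^{1/m} · y. Then: (i) g_ψ is a bijective linear map with |det Dg_ψ| = p_ψ(ỹ(ψ)); (ii) the transformed predictive density q_ψ(v) := p_ψ(g_ψ⁻¹(v)) · |det Dg_ψ|⁻¹ attains its unique maximum at ṽ(ψ) := g_ψ(ỹ(ψ)); and (iii) the canonical property holds: f_ψ(ỹ(ψ)) · |det Dg_ψ|⁻¹ = L(ψ) for all ψ ∈ Ψ.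 In particular, a canonical scale always exists when the predictive likelihood is unimodal. -/
/-! Scaling `ℝ^m` by `c = t ^ (1/m)`, where `t = f(ỹ)/L` is the height of the predictive mode,
has Jacobian `c ^ m = t`. A positive constant factor and an invertible reparametrisation do not
move a unique maximum, and `f(ỹ) / t = L` is the canonical property. -/

open MeasureTheory

/-- The scalar-multiplication (linear) change of scale used in the proof of
Theorem 3.1: `y ↦ c • y` on `ℝ^m`, as a linear map. -/
noncomputable def scaleLinMap (m : ℕ) (c : ℝ) : (Fin m → ℝ) →ₗ[ℝ] (Fin m → ℝ) :=
  c • LinearMap.id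

theorem det_scaleLinMap (m : ℕ) (c : ℝ) : LinearMap.det (scaleLinMap m c) = c ^ m := by
  simp [scaleLinMap]

theorem abs_det_scaleLinMap_rpow_one_div {m : ℕ} (hm : m ≠ 0) {t : ℝ} (ht : 0 ≤ t) :
    |LinearMap.det (scaleLinMap m (t ^ ((1 : ℝ) / m)))| = t := by
  rw [det_scaleLinMap, one_div, Real.rpow_inv_natCast_pow ht hm, abs_of_nonneg ht]

theorem inv_smul_comp_mul_lt_of_unique_max {G₀ V : Type*} [GroupWithZero G₀] [MulAction G₀ V]
    {c : G₀} (hc : c ≠ 0) {q : V → ℝ} {y₀ : V} (hq : ∀ y, y ≠ y₀ → q y < q y₀)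
    {d : ℝ} (hd : 0 < d) (v : V) (hv : v ≠ c • y₀) :
    q (c⁻¹ • v) * d < q (c⁻¹ • (c • y₀)) * d := by
  rw [inv_smul_smul₀ hc]
  refine mul_lt_mul_of_pos_right (hq _ fun h ↦ hv ?_) hd
  rw [← h, smul_inv_smul₀ hc]

theorem canonical_scale_exists_general {p m : ℕ} (hm : 0 < m) (Ψ : Set (Fin p → ℝ))
    (f : (Fin p → ℝ) → (Fin m → ℝ) → ℝ)
    (L : (Fin p → ℝ) → ℝ)
    (pd : (Fin p → ℝ) → (Fin m → ℝ) → ℝ)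
    (hpd : ∀ ψ ∈ Ψ, ∀ y, pd ψ y = f ψ y / L ψ)
    (ytil : (Fin p → ℝ) → (Fin m → ℝ))
    (h_unimodal : ∀ ψ ∈ Ψ, ∀ y, y ≠ ytil ψ → pd ψ y < pd ψ (ytil ψ))
    (h_mode_pos : ∀ ψ ∈ Ψ, 0 < pd ψ (ytil ψ)) :
    ∀ ψ ∈ Ψ,
      -- (i) bijective linear map with absolute Jacobian determinant `pd ψ (ỹ ψ)`
      (Function.Bijective (fun y : Fin m → ℝ => (pd ψ (ytil ψ)) ^ ((1 : ℝ) / m) • y) ∧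
        |LinearMap.det (scaleLinMap m ((pd ψ (ytil ψ)) ^ ((1 : ℝ) / m)))| = pd ψ (ytil ψ)) ∧
      -- (ii) the transformed predictive density has its unique maximum at `ṽ ψ = g_ψ (ỹ ψ)`
      (∀ v : Fin m → ℝ, v ≠ (pd ψ (ytil ψ)) ^ ((1 : ℝ) / m) • ytil ψ →
        pd ψ (((pd ψ (ytil ψ)) ^ ((1 : ℝ) / m))⁻¹ • v) *
            |LinearMap.det (scaleLinMap m ((pd ψ (ytil ψ)) ^ ((1 : ℝ) / m)))|⁻¹ <
          pd ψ (((pd ψ (ytil ψ)) ^ ((1 : ℝ) / m))⁻¹ •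
              ((pd ψ (ytil ψ)) ^ ((1 : ℝ) / m) • ytil ψ)) *
            |LinearMap.det (scaleLinMap m ((pd ψ (ytil ψ)) ^ ((1 : ℝ) / m)))|⁻¹) ∧
      -- (iii) the canonical property
      f ψ (ytil ψ) * |LinearMap.det (scaleLinMap m ((pd ψ (ytil ψ)) ^ ((1 : ℝ) / m)))|⁻¹ = L ψ := by
  intro ψ hψ
  have hmode := h_mode_pos ψ hψ
  have hdet := abs_det_scaleLinMap_rpow_one_div hm.ne' hmode.le
  have hc : pd ψ (ytil ψ) ^ ((1 : ℝ) / m) ≠ 0 := (Real.rpow_pos_of_pos hmode _).ne'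
  refine ⟨⟨MulAction.bijective₀ hc, hdet⟩, ?_, ?_⟩
  · rw [hdet]
    exact inv_smul_comp_mul_lt_of_unique_max hc (h_unimodal ψ hψ) (inv_pos.mpr hmode)
  · have hpd_mode := hpd ψ hψ (ytil ψ)
    have hf_mode : f ψ (ytil ψ) ≠ 0 := (div_ne_zero_iff.mp (hpd_mode ▸ hmode.ne')).1
    rw [hdet, hpd_mode, ← div_eq_mul_inv, div_div_cancel₀ hf_mode]

/-- Theorem 3.1 (existence of a canonical scale): if the predictive density
`pd ψ = f ψ / L ψ` is unimodal with unique global maximizer `ỹ ψ` at which it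
is positive, then the linear scale `g_ψ(y) = (pd ψ (ỹ ψ))^(1/m) • y` is
(i) bijective with `|det D g_ψ| = pd ψ (ỹ ψ)`, (ii) the transformed predictive
density `v ↦ pd ψ (g_ψ⁻¹ v) · |det D g_ψ|⁻¹` attains its unique maximum at
`ṽ ψ = g_ψ (ỹ ψ)`, and (iii) the canonical property
`f ψ (ỹ ψ) · |det D g_ψ|⁻¹ = L ψ` holds for all `ψ ∈ Ψ`. -/
theorem canonical_scale_exists {p m : ℕ} (hm : 0 < m) (Ψ : Set (Fin p → ℝ))
    (f : (Fin p → ℝ) → (Fin m → ℝ) → ℝ)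
    (hf_nonneg : ∀ ψ ∈ Ψ, ∀ y, 0 ≤ f ψ y)
    (hf_meas : ∀ ψ ∈ Ψ, Measurable (f ψ))
    (hf_int : ∀ ψ ∈ Ψ, Integrable (f ψ))
    (L : (Fin p → ℝ) → ℝ)
    (hL : ∀ ψ ∈ Ψ, L ψ = ∫ y, f ψ y)
    (hL_pos : ∀ ψ ∈ Ψ, 0 < L ψ)
    (pd : (Fin p → ℝ) → (Fin m → ℝ) → ℝ)
    (hpd : ∀ ψ ∈ Ψ, ∀ y, pd ψ y = f ψ y / L ψ)
    (ytil : (Fin p → ℝ) → (Fin m → ℝ))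
    (h_unimodal : ∀ ψ ∈ Ψ, ∀ y, y ≠ ytil ψ → pd ψ y < pd ψ (ytil ψ))
    (h_mode_pos : ∀ ψ ∈ Ψ, 0 < pd ψ (ytil ψ)) :
    ∀ ψ ∈ Ψ,
      -- (i) bijective linear map with absolute Jacobian determinant `pd ψ (ỹ ψ)`
      (Function.Bijective (fun y : Fin m → ℝ => (pd ψ (ytil ψ)) ^ ((1 : ℝ) / m) • y) ∧
        |LinearMap.det (scaleLinMap m ((pd ψ (ytil ψ)) ^ ((1 : ℝ) / m)))| = pd ψ (ytil ψ)) ∧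
      -- (ii) the transformed predictive density has its unique maximum at `ṽ ψ = g_ψ (ỹ ψ)`
      (∀ v : Fin m → ℝ, v ≠ (pd ψ (ytil ψ)) ^ ((1 : ℝ) / m) • ytil ψ →
        pd ψ (((pd ψ (ytil ψ)) ^ ((1 : ℝ) / m))⁻¹ • v) *
            |LinearMap.det (scaleLinMap m ((pd ψ (ytil ψ)) ^ ((1 : ℝ) / m)))|⁻¹ <
          pd ψ (((pd ψ (ytil ψ)) ^ ((1 : ℝ) / m))⁻¹ •
              ((pd ψ (ytil ψ)) ^ ((1 : ℝ) / m) • ytil ψ)) *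
            |LinearMap.det (scaleLinMap m ((pd ψ (ytil ψ)) ^ ((1 : ℝ) / m)))|⁻¹) ∧
      -- (iii) the canonical property
      f ψ (ytil ψ) * |LinearMap.det (scaleLinMap m ((pd ψ (ytil ψ)) ^ ((1 : ℝ) / m)))|⁻¹ = L ψ :=
  canonical_scale_exists_general hm Ψ f L pd hpd ytil h_unimodal h_mode_pos
end

section
/- Let h : ℝ^p × ℝ^m → ℝ be twice continuously differentiable and let ṽ : ℝ^p → ℝ^m be differentiable with ∇_v h(ψ, ṽ(ψ)) = 0 for all ψ. For ψ ∈ ℝ^p define the negative-Hessian blocks at (ψ, ṽ(ψ)): I_ψψ(ψ) = -∂²h/∂ψ∂ψᵀ, I_ψv(ψ) = -∂²h/∂ψ∂vᵀ, I_vψ(ψ) = I_ψv(ψ)ᵀ, I_vv(ψ) = -∂²h/∂v∂vᵀ, all evaluated at (ψ, ṽ(ψ)), and assume I_vv(ψ) is invertible. Let ℓ(ψ) := h(ψ, ṽ(ψ)). Then for every ψ, the negative Hessian of ℓ equals the Schur complement: -∇²ℓ(ψ) = I_ψψ(ψ) - I_ψv(ψ) I_vv(ψ)⁻¹ I_vψ(ψ);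 equivalently, (-∇²ℓ(ψ))⁻¹ is the (ψ,ψ) block I^{ψψ} of the inverse of the full negative-Hessian matrix of h at (ψ, ṽ(ψ)) whenever that matrix is invertible. -/
/-!
Write `H (ψ, v) = h ψ v` and `B` for the second derivative of `H` at `(ψ, ṽ ψ)`. Stationarity
makes the first derivative of `ℓ` the partial derivative of `H` in `ψ`, evaluated along the graph
`a ↦ (a, ṽ a)`; differentiating along the graph once more gives
`ℓ''(ψ) u u' = B (u, ṽ' u) (u', 0)`, and differentiating the stationarity identity itself gives
`B (u, ṽ' u) (0, w) = 0`. In coordinates, with `X` the matrix of `ṽ'`, these read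
`-∇²ℓ = I_ψψ + X I_vψ` and `I_ψv + X I_vv = 0` (the latter uses the symmetry of `B`), and
eliminating `X = -I_ψv I_vv⁻¹` leaves the Schur complement of `I_vv`, whose inverse is the
`(ψ,ψ)` block of the inverse of the full matrix by the block-inverse formula.
-/

open Matrix

section Calculus

variable {𝕜 : Type*} [NontriviallyNormedField 𝕜]
  {X : Type*} [NormedAddCommGroup X] [NormedSpace 𝕜 X]
  {Y : Type*} [NormedAddCommGroup Y] [NormedSpace 𝕜 Y]
  {Z : Type*} [NormedAddCommGroup Z] [NormedSpace 𝕜 Z]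
  {E : Type*} [NormedAddCommGroup E] [NormedSpace 𝕜 E]
  {F : Type*} [NormedAddCommGroup F] [NormedSpace 𝕜 F]

theorem HasFDerivAt.fderiv_comp_apply {H : Y → Z} {γ : X → Y} {γ' : X →L[𝕜] Y} {a : X}
    (hγ : HasFDerivAt γ γ' a) (hH : DifferentiableAt 𝕜 H (γ a)) (u : X) :
    fderiv 𝕜 (fun b => H (γ b)) a u = fderiv 𝕜 H (γ a) (γ' u) :=
  DFunLike.congr_fun (hH.hasFDerivAt.comp a hγ).fderiv u

theorem HasFDerivAt.fderiv_fderiv_comp_apply {H : Y → Z} {γ : X → Y} {γ' : X →L[𝕜] Y} {a : X}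
    (hγ : HasFDerivAt γ γ' a) (hH : DifferentiableAt 𝕜 (fderiv 𝕜 H) (γ a)) (c : Y) (u : X) :
    fderiv 𝕜 (fun b => fderiv 𝕜 H (γ b) c) a u = fderiv 𝕜 (fderiv 𝕜 H) (γ a) (γ' u) c := by
  simpa using DFunLike.congr_fun
    ((hH.hasFDerivAt.comp a hγ).clm_apply (hasFDerivAt_const c a)).fderiv u

variable {H : E × F → Z} {g : E → F}

theorem fderiv_comp_prodMk_left_apply {a : E} {v : F} (hH : DifferentiableAt 𝕜 H (a, v))
    (u : E) : fderiv 𝕜 (fun b => H (b, v)) a u = fderiv 𝕜 H (a, v) (u, 0) :=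
  (hasFDerivAt_prodMk_left a v).fderiv_comp_apply (γ := fun b => (b, v)) hH u

theorem fderiv_comp_prodMk_right_apply {a : E} {v : F} (hH : DifferentiableAt 𝕜 H (a, v))
    (w : F) : fderiv 𝕜 (fun y => H (a, y)) v w = fderiv 𝕜 H (a, v) (0, w) :=
  (hasFDerivAt_prodMk_right a v).fderiv_comp_apply (γ := fun y => (a, y)) hH w

theorem fderiv_fderiv_comp_prodMk_left_left {a : E} {v : F} (hH : Differentiable 𝕜 H)
    (hH' : DifferentiableAt 𝕜 (fderiv 𝕜 H) (a, v)) (u u' : E) :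
    fderiv 𝕜 (fun b => fderiv 𝕜 (fun b' => H (b', v)) b u') a u
      = fderiv 𝕜 (fderiv 𝕜 H) (a, v) (u, 0) (u', 0) := by
  simp only [fun b => fderiv_comp_prodMk_left_apply (hH (b, v)) u']
  exact (hasFDerivAt_prodMk_left a v).fderiv_fderiv_comp_apply (γ := fun b => (b, v))
    hH' (u', 0) u

theorem fderiv_fderiv_comp_prodMk_right_left {a : E} {v : F} (hH : Differentiable 𝕜 H)
    (hH' : DifferentiableAt 𝕜 (fderiv 𝕜 H) (a, v)) (w : F) (u' : E) :
    fderiv 𝕜 (fun y => fderiv 𝕜 (fun b => H (b, y)) a u') v w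
      = fderiv 𝕜 (fderiv 𝕜 H) (a, v) (0, w) (u', 0) := by
  simp only [fun y => fderiv_comp_prodMk_left_apply (hH (a, y)) u']
  exact (hasFDerivAt_prodMk_right a v).fderiv_fderiv_comp_apply (γ := fun y => (a, y))
    hH' (u', 0) w

theorem fderiv_fderiv_comp_prodMk_right_right {a : E} {v : F} (hH : Differentiable 𝕜 H)
    (hH' : DifferentiableAt 𝕜 (fderiv 𝕜 H) (a, v)) (w w' : F) :
    fderiv 𝕜 (fun y => fderiv 𝕜 (fun y' => H (a, y')) y w') v w
      = fderiv 𝕜 (fderiv 𝕜 H) (a, v) (0, w) (0, w') := by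
  simp only [fun y => fderiv_comp_prodMk_right_apply (hH (a, y)) w']
  exact (hasFDerivAt_prodMk_right a v).fderiv_fderiv_comp_apply (γ := fun y => (a, y))
    hH' (0, w') w

theorem fderiv_comp_graph_apply_of_stationary {a : E} (hH : DifferentiableAt 𝕜 H (a, g a))
    (hg : DifferentiableAt 𝕜 g a) (hstat : ∀ w, fderiv 𝕜 H (a, g a) (0, w) = 0) (u : E) :
    fderiv 𝕜 (fun b => H (b, g b)) a u = fderiv 𝕜 H (a, g a) (u, 0) := by
  have hsplit : (u, fderiv 𝕜 g a u) = (u, 0) + (0, fderiv 𝕜 g a u) := by simp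
  rw [((hasFDerivAt_id a).prodMk hg.hasFDerivAt).fderiv_comp_apply (γ := fun b => (b, g b))
      hH u, ContinuousLinearMap.prod_apply, ContinuousLinearMap.id_apply, hsplit, map_add, hstat,
    add_zero]

theorem fderiv_fderiv_comp_graph_apply_of_stationary {a : E} (hH : Differentiable 𝕜 H)
    (hH' : DifferentiableAt 𝕜 (fderiv 𝕜 H) (a, g a)) (hg : Differentiable 𝕜 g)
    (hstat : ∀ b w, fderiv 𝕜 H (b, g b) (0, w) = 0) (u u' : E) :
    fderiv 𝕜 (fun b => fderiv 𝕜 (fun b' => H (b', g b')) b u') a u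
      = fderiv 𝕜 (fderiv 𝕜 H) (a, g a) (u, fderiv 𝕜 g a u) (u', 0) := by
  simp only [fun b => fderiv_comp_graph_apply_of_stationary (hH (b, g b)) (hg b) (hstat b) u']
  exact ((hasFDerivAt_id a).prodMk (hg a).hasFDerivAt).fderiv_fderiv_comp_apply
    (γ := fun b => (b, g b)) hH' (u', 0) u

theorem fderiv_fderiv_graph_apply_inr_eq_zero {a : E}
    (hH' : DifferentiableAt 𝕜 (fderiv 𝕜 H) (a, g a)) (hg : DifferentiableAt 𝕜 g a)
    (hstat : ∀ b w, fderiv 𝕜 H (b, g b) (0, w) = 0) (u : E) (w : F) :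
    fderiv 𝕜 (fderiv 𝕜 H) (a, g a) (u, fderiv 𝕜 g a u) (0, w) = 0 := by
  have h := ((hasFDerivAt_id a).prodMk hg.hasFDerivAt).fderiv_fderiv_comp_apply
    (γ := fun b => (b, g b)) hH' (0, w) u
  simpa [hstat] using h.symm

end Calculus

theorem apply_prodMk_eq_add_sum {R M E ι L : Type*} [Semiring R] [AddCommMonoid M] [Module R M]
    [AddCommMonoid E] [Module R E] [Fintype ι] [DecidableEq ι] [FunLike L (E × (ι → R)) M]
    [LinearMapClass L R (E × (ι → R)) M] (f : L) (u : E) (w : ι → R) :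
    f (u, w) = f (u, 0) + ∑ k, w k • f (0, Pi.single k 1) := by
  have hsplit : (u, w) = (u, 0) + ∑ k, w k • ((0 : E), (Pi.single k 1 : ι → R)) := by
    ext j
    · simp [Prod.fst_sum]
    · simp [Prod.snd_sum, Finset.sum_apply, Pi.single_apply]
  rw [hsplit, map_add, map_sum]
  simp only [map_smul]

theorem Matrix.eq_neg_mul_inv_of_add_mul_eq_zero {m n α : Type*} [Fintype n] [DecidableEq n]
    [CommRing α] {B X : Matrix m n α} {D : Matrix n n α} (hD : IsUnit D.det)
    (h : B + X * D = 0) : X = -(B * D⁻¹) := by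
  calc X = X * D * D⁻¹ := by rw [Matrix.mul_assoc, mul_nonsing_inv _ hD, Matrix.mul_one]
    _ = -(B * D⁻¹) := by rw [eq_neg_of_add_eq_zero_right h, Matrix.neg_mul]

theorem Matrix.toBlocks₁₁_inv_fromBlocks {m n α : Type*} [Fintype m] [DecidableEq m] [Fintype n]
    [DecidableEq n] [CommRing α] {A : Matrix m m α} {B : Matrix m n α} {C : Matrix n m α}
    {D : Matrix n n α} (hD : IsUnit D.det) (hM : IsUnit (fromBlocks A B C D).det) :
    (fromBlocks A B C D)⁻¹.toBlocks₁₁ = (A - B * D⁻¹ * C)⁻¹ := by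
  have := D.invertibleOfIsUnitDet hD
  have := (fromBlocks A B C D).invertibleOfIsUnitDet hM
  have := invertibleOfFromBlocks₂₂Invertible A B C D
  simp only [← invOf_eq_nonsing_inv, invOf_fromBlocks₂₂_eq, toBlocks_fromBlocks₁₁]

theorem neg_apply_graph_eq_schur {𝕜 ι κ : Type*} [NontriviallyNormedField 𝕜] [DecidableEq ι]
    [Fintype κ] [DecidableEq κ]
    (B : (ι → 𝕜) × (κ → 𝕜) →L[𝕜] (ι → 𝕜) × (κ → 𝕜) →L[𝕜] 𝕜) (hB : ∀ y y', B y y' = B y' y)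
    (L : (ι → 𝕜) →L[𝕜] (κ → 𝕜)) (hL : ∀ u w, B (u, L u) (0, w) = 0)
    {A : Matrix ι ι 𝕜} {C : Matrix ι κ 𝕜} {D : Matrix κ κ 𝕜}
    (hA : ∀ i j, A i j = -B (Pi.single i 1, 0) (Pi.single j 1, 0))
    (hC : ∀ i k, C i k = -B (0, Pi.single k 1) (Pi.single i 1, 0))
    (hD : ∀ k l, D k l = -B (0, Pi.single k 1) (0, Pi.single l 1)) (hDinv : IsUnit D.det) :
    of (fun i j => -B (Pi.single i 1, L (Pi.single i 1)) (Pi.single j 1, 0))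
      = A - C * D⁻¹ * Cᵀ := by
  set X : Matrix ι κ 𝕜 := of fun i k => L (Pi.single i 1) k
  have hrow : ∀ i y, B (Pi.single i 1, L (Pi.single i 1)) y
      = B (Pi.single i 1, 0) y + ∑ k, X i k * B (0, Pi.single k 1) y := by
    intro i y
    rw [apply_prodMk_eq_add_sum B]
    simp only [_root_.add_apply, _root_.sum_apply, _root_.smul_apply, smul_eq_mul, X, of_apply]
  have hcross : C + X * D = 0 := by
    ext i l
    have h := hL (Pi.single i 1) (Pi.single l 1)
    rw [hrow, hB] at h
    simp only [Matrix.add_apply, mul_apply, hC, hD, Matrix.zero_apply, mul_neg,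
      Finset.sum_neg_distrib]
    linear_combination -h
  calc of (fun i j => -B (Pi.single i 1, L (Pi.single i 1)) (Pi.single j 1, 0))
      = A + X * Cᵀ := by
        ext i j
        simp [hrow, mul_apply, hA, hC, add_comm]
    _ = A - C * D⁻¹ * Cᵀ := by
        rw [eq_neg_mul_inv_of_add_mul_eq_zero hDinv hcross, Matrix.neg_mul, sub_eq_add_neg]

/-- Theorem 3.2(ii): with `ṽ ψ` a stationary point of `h (ψ, ·)` for every `ψ`,
the negative Hessian of the profile `ℓ(ψ) = h(ψ, ṽ ψ)` equals the Schur
complement `I_ψψ - I_ψv I_vv⁻¹ I_vψ` of the negative-Hessian blocks of `h`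
evaluated at `(ψ, ṽ ψ)`; equivalently, its inverse is the `(ψ,ψ)` block of the
inverse of the full negative-Hessian matrix of `h` whenever the latter is
invertible. -/
theorem hessian_profile_schur {p m : ℕ}
    (h : (Fin p → ℝ) → (Fin m → ℝ) → ℝ)
    (hsmooth : ContDiff ℝ 2 (fun q : (Fin p → ℝ) × (Fin m → ℝ) => h q.1 q.2))
    (vtil : (Fin p → ℝ) → (Fin m → ℝ))
    (hvdiff : Differentiable ℝ vtil)
    (hstat : ∀ ψ : Fin p → ℝ, fderiv ℝ (fun v => h ψ v) (vtil ψ) = 0)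
    (Iψψ : (Fin p → ℝ) → Matrix (Fin p) (Fin p) ℝ)
    (hIψψ : ∀ ψ i j, Iψψ ψ i j =
      -(fderiv ℝ (fun a => fderiv ℝ (fun b => h b (vtil ψ)) a (Pi.single j 1)) ψ (Pi.single i 1)))
    (Iψv : (Fin p → ℝ) → Matrix (Fin p) (Fin m) ℝ)
    (hIψv : ∀ ψ i j, Iψv ψ i j =
      -(fderiv ℝ (fun v => fderiv ℝ (fun a => h a v) ψ (Pi.single i 1)) (vtil ψ) (Pi.single j 1)))
    (Ivψ : (Fin p → ℝ) → Matrix (Fin m) (Fin p) ℝ)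
    (hIvψ : ∀ ψ, Ivψ ψ = (Iψv ψ)ᵀ)
    (Ivv : (Fin p → ℝ) → Matrix (Fin m) (Fin m) ℝ)
    (hIvv : ∀ ψ i j, Ivv ψ i j =
      -(fderiv ℝ (fun v => fderiv ℝ (fun w => h ψ w) v (Pi.single j 1)) (vtil ψ) (Pi.single i 1)))
    (hinv : ∀ ψ, IsUnit (Ivv ψ).det)
    (ℓ : (Fin p → ℝ) → ℝ)
    (hℓ : ∀ ψ, ℓ ψ = h ψ (vtil ψ)) :
    ∀ ψ : Fin p → ℝ,
      (Matrix.of fun i j : Fin p =>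
          -(fderiv ℝ (fun a => fderiv ℝ ℓ a (Pi.single j 1)) ψ (Pi.single i 1)))
        = Iψψ ψ - Iψv ψ * (Ivv ψ)⁻¹ * Ivψ ψ ∧
      (IsUnit (Matrix.fromBlocks (Iψψ ψ) (Iψv ψ) (Ivψ ψ) (Ivv ψ)).det →
        (Matrix.of fun i j : Fin p =>
            -(fderiv ℝ (fun a => fderiv ℝ ℓ a (Pi.single j 1)) ψ (Pi.single i 1)))⁻¹
          = ((Matrix.fromBlocks (Iψψ ψ) (Iψv ψ) (Ivψ ψ) (Ivv ψ))⁻¹).toBlocks₁₁) := by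
  intro ψ
  set H : (Fin p → ℝ) × (Fin m → ℝ) → ℝ := fun q => h q.1 q.2
  have hH : Differentiable ℝ H := hsmooth.differentiable (by norm_num)
  have hH' : Differentiable ℝ (fderiv ℝ H) :=
    (hsmooth.fderiv_right le_rfl).differentiable one_ne_zero
  have hstat' : ∀ b w, fderiv ℝ H (b, vtil b) (0, w) = 0 := fun b w => by
    rw [← fderiv_comp_prodMk_right_apply (hH _)]
    exact DFunLike.congr_fun (hstat b) w
  have hℓH : ℓ = fun a => H (a, vtil a) := funext hℓ
  have hschur : of (fun i j : Fin p =>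
      -(fderiv ℝ (fun a => fderiv ℝ ℓ a (Pi.single j 1)) ψ (Pi.single i 1)))
        = Iψψ ψ - Iψv ψ * (Ivv ψ)⁻¹ * Ivψ ψ := by
    rw [hIvψ, hℓH]
    simp only [fderiv_fderiv_comp_graph_apply_of_stationary hH (hH' _) hvdiff hstat']
    refine neg_apply_graph_eq_schur _
      (hsmooth.contDiffAt.isSymmSndFDerivAt (by simp)).eq _
      (fderiv_fderiv_graph_apply_inr_eq_zero (hH' _) (hvdiff ψ) hstat') (fun i j => ?_)
      (fun i k => ?_) (fun k l => ?_) (hinv ψ)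
    · exact (hIψψ ψ i j).trans (congrArg _ (fderiv_fderiv_comp_prodMk_left_left hH (hH' _) _ _))
    · exact (hIψv ψ i k).trans (congrArg _ (fderiv_fderiv_comp_prodMk_right_left hH (hH' _) _ _))
    · exact (hIvv ψ k l).trans (congrArg _ (fderiv_fderiv_comp_prodMk_right_right hH (hH' _) _ _))
  refine ⟨hschur, fun hM => ?_⟩
  rw [hschur, toBlocks₁₁_inv_fromBlocks (hinv ψ) hM]
end

section
/- Let -∞ ≤ l < u ≤ ∞ and let f : (l,u) → ℝ be twice continuously differentiable with f > 0 on (l,u), with f, f', f'' integrable on (l,u), ∫_l^u f = 1, and with lim f(b) = 0 and lim f'(b) = 0 as b → l⁺ and b → u⁻. Then the second Bartlett identity in the random parameter holds: ∫_l^u (d/db log f(b))² f(b) db + ∫_l^u (d²/db² log f(b)) f(b) db = ∫_l^u f''(b) db = 0. -/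
/-!
Pointwise, `((log f)')² f + (log f)'' f = (f')² / f + (f'' f - (f')²) / f = f''`, so the left-hand
side equals `∫ f''`. By the fundamental theorem of calculus on the (possibly unbounded) interval,
`∫ f'' = f'(u⁻) - f'(l⁺) = 0`.
-/

open MeasureTheory Filter Topology Set

namespace EReal

lemma ordConnected_preimage_coe_Ioo (l u : EReal) : ((↑) ⁻¹' Ioo l u : Set ℝ).OrdConnected :=
  ordConnected_Ioo.preimage_mono fun _ _ => EReal.coe_le_coe_iff.mpr

lemma comap_coe_nhdsGT_neBot {l : EReal} (hl : l ≠ ⊤) :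
    (Filter.comap ((↑) : ℝ → EReal) (𝓝[>] l)).NeBot := by
  refine comap_neBot fun t ht => ?_
  obtain ⟨c, hlc, hct⟩ := (mem_nhdsGT_iff_exists_Ioo_subset' (lt_top_iff_ne_top.mpr hl)).mp ht
  obtain ⟨x, hlx, hxc⟩ := lt_iff_exists_real_btwn.mp hlc
  exact ⟨x, hct ⟨hlx, hxc⟩⟩

lemma comap_coe_nhdsLT_neBot {u : EReal} (hu : u ≠ ⊥) :
    (Filter.comap ((↑) : ℝ → EReal) (𝓝[<] u)).NeBot := by
  refine comap_neBot fun t ht => ?_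
  obtain ⟨c, hcu, hct⟩ := (mem_nhdsLT_iff_exists_Ioo_subset' (bot_lt_iff_ne_bot.mpr hu)).mp ht
  obtain ⟨x, hcx, hxu⟩ := lt_iff_exists_real_btwn.mp hcu
  exact ⟨x, hct ⟨hcx, hxu⟩⟩

lemma eventually_comap_coe_nhdsGT_mem_Ioo {l u : EReal} (h : l < u) :
    ∀ᶠ t : ℝ in Filter.comap ((↑) : ℝ → EReal) (𝓝[>] l), (t : EReal) ∈ Ioo l u :=
  Filter.preimage_mem_comap (m := ((↑) : ℝ → EReal)) (Ioo_mem_nhdsGT h)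

lemma eventually_comap_coe_nhdsLT_mem_Ioo {l u : EReal} (h : l < u) :
    ∀ᶠ t : ℝ in Filter.comap ((↑) : ℝ → EReal) (𝓝[<] u), (t : EReal) ∈ Ioo l u :=
  Filter.preimage_mem_comap (m := ((↑) : ℝ → EReal)) (Ioo_mem_nhdsLT h)

end EReal

theorem setIntegral_eq_sub_of_hasDerivAt_of_tendsto {E : Type*} [NormedAddCommGroup E]
    [NormedSpace ℝ E] [CompleteSpace E] {S : Set ℝ} (hSm : MeasurableSet S) (hS : S.OrdConnected)
    {L₁ L₂ : Filter ℝ} [L₁.NeBot] [L₂.NeBot] [L₁.IsCountablyGenerated] [L₂.IsCountablyGenerated]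
    (hmem₁ : ∀ᶠ t in L₁, t ∈ S) (hmem₂ : ∀ᶠ t in L₂, t ∈ S)
    (hle₁ : ∀ x ∈ S, ∀ᶠ t in L₁, t ≤ x) (hle₂ : ∀ x ∈ S, ∀ᶠ t in L₂, x ≤ t)
    {g g' : ℝ → E} (hderiv : ∀ x ∈ S, HasDerivAt g (g' x) x) (hint : IntegrableOn g' S)
    {m n : E} (hm : Tendsto g L₁ (𝓝 m)) (hn : Tendsto g L₂ (𝓝 n)) :
    ∫ x in S, g' x = n - m := by
  obtain ⟨x₀, hx₀⟩ := hmem₁.exists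
  have hcover : AECover (volume.restrict S) (L₁ ×ˢ L₂) fun p : ℝ × ℝ => Icc p.1 p.2 :=
    { ae_eventually_mem := by
        filter_upwards [ae_restrict_mem hSm] with x hx
        filter_upwards [(hle₁ x hx).prod_mk (hle₂ x hx)] with p hp using hp
      measurableSet := fun _ => measurableSet_Icc }
  refine hcover.integral_eq_of_tendsto _ hint <|
    ((hn.comp tendsto_snd).sub (hm.comp tendsto_fst)).congr' ?_
  filter_upwards [hmem₁.prod_mk hmem₂, (hle₁ x₀ hx₀).prod_mk (hle₂ x₀ hx₀)] with p hp hpx₀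
  have hle : p.1 ≤ p.2 := hpx₀.1.trans hpx₀.2
  have hsub : Icc p.1 p.2 ⊆ S := hS.out hp.1 hp.2
  have hint' : IntervalIntegrable g' volume p.1 p.2 :=
    (intervalIntegrable_iff_integrableOn_Icc_of_le hle).mpr (hint.mono_set hsub)
  rw [Measure.restrict_restrict measurableSet_Icc, inter_eq_left.mpr hsub,
    integral_Icc_eq_integral_Ioc, ← intervalIntegral.integral_of_le hle,
    intervalIntegral.integral_eq_sub_of_hasDerivAt
      (fun y hy => hderiv y (hsub (uIcc_of_le hle ▸ hy))) hint']
  rfl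

theorem deriv_log_sq_mul_add_deriv_deriv_log_mul {f : ℝ → ℝ} {x : ℝ}
    (hf : ∀ᶠ y in 𝓝 x, DifferentiableAt ℝ f y) (hf' : DifferentiableAt ℝ (deriv f) x)
    (hx : f x ≠ 0) :
    deriv (fun y => Real.log (f y)) x ^ 2 * f x + deriv (deriv fun y => Real.log (f y)) x * f x =
      deriv (deriv f) x := by
  have hlog : deriv (fun y => Real.log (f y)) =ᶠ[𝓝 x] fun y => deriv f y / f y := by
    filter_upwards [hf, hf.self_of_nhds.continuousAt.eventually_ne hx] with y hdy hy
    exact (hdy.hasDerivAt.log hy).deriv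
  rw [hlog.self_of_nhds, hlog.deriv_eq,
    (hf'.hasDerivAt.fun_div hf.self_of_nhds.hasDerivAt hx).deriv]
  field_simp
  ring

/-- No integrability of `A`, `B` is needed: if one is not integrable, neither is, and both
integrals take the junk value `0`. -/
theorem integral_add_integral_eq_zero_of_ae_add_eq {α E : Type*} [MeasurableSpace α]
    {μ : Measure α} [NormedAddCommGroup E] [NormedSpace ℝ E] {A B g : α → E}
    (h : ∀ᵐ a ∂μ, A a + B a = g a) (hg : Integrable g μ) (hg₀ : ∫ a, g a ∂μ = 0) :
    ∫ a, A a ∂μ + ∫ a, B a ∂μ = 0 := by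
  have hB : ∀ᵐ a ∂μ, B a = g a - A a := by
    filter_upwards [h] with a ha using eq_sub_of_add_eq' ha
  have hA : ∀ᵐ a ∂μ, A a = g a - B a := by
    filter_upwards [h] with a ha using eq_sub_of_add_eq ha
  by_cases hAi : Integrable A μ
  · have hBi : Integrable B μ := (hg.sub hAi).congr (hB.mono fun _ ha => ha.symm)
    rw [← integral_add hAi hBi, integral_congr_ae h, hg₀]
  · have hBi : ¬Integrable B μ := fun hBi => hAi ((hg.sub hBi).congr (hA.mono fun _ ha => ha.symm))
    rw [integral_undef hAi, integral_undef hBi, add_zero]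

theorem second_bartlett_identity_general (l u : EReal) (hlu : l < u)
    (S : Set ℝ) (hS : S = {x : ℝ | l < (x : EReal) ∧ (x : EReal) < u})
    (f : ℝ → ℝ)
    (hf_smooth : ContDiffOn ℝ 2 f S)
    (hf_pos : ∀ x ∈ S, 0 < f x)
    (hf''_int : IntegrableOn (deriv (deriv f)) S)
    (hf'_lim_l : Tendsto (deriv f)
      (Filter.comap (fun x : ℝ => (x : EReal)) (𝓝[>] l)) (𝓝 (0 : ℝ)))
    (hf'_lim_u : Tendsto (deriv f)
      (Filter.comap (fun x : ℝ => (x : EReal)) (𝓝[<] u)) (𝓝 (0 : ℝ))) :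
    ((∫ b in S, (deriv (fun x => Real.log (f x)) b) ^ 2 * f b) +
        (∫ b in S, deriv (deriv (fun x => Real.log (f x))) b * f b))
      = (∫ b in S, deriv (deriv f) b) ∧
    (∫ b in S, deriv (deriv f) b) = 0 := by
  obtain rfl : S = (↑) ⁻¹' Ioo l u := hS
  have hopen : IsOpen ((↑) ⁻¹' Ioo l u : Set ℝ) := isOpen_Ioo.preimage continuous_coe_real_ereal
  have hf' : ContDiffOn ℝ 1 (deriv f) _ := hf_smooth.deriv_of_isOpen hopen (by norm_num)
  have hdf : ∀ x ∈ (↑) ⁻¹' Ioo l u, DifferentiableAt ℝ f x := fun x hx =>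
    (hf_smooth.differentiableOn two_ne_zero).differentiableAt (hopen.mem_nhds hx)
  have hddf : ∀ x ∈ (↑) ⁻¹' Ioo l u, DifferentiableAt ℝ (deriv f) x := fun x hx =>
    (hf'.differentiableOn one_ne_zero).differentiableAt (hopen.mem_nhds hx)
  have := EReal.comap_coe_nhdsGT_neBot hlu.ne_top
  have := EReal.comap_coe_nhdsLT_neBot hlu.ne_bot
  have hzero : ∫ b in (↑) ⁻¹' Ioo l u, deriv (deriv f) b = 0 := by
    simpa using setIntegral_eq_sub_of_hasDerivAt_of_tendsto hopen.measurableSet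
      (EReal.ordConnected_preimage_coe_Ioo l u) (EReal.eventually_comap_coe_nhdsGT_mem_Ioo hlu)
      (EReal.eventually_comap_coe_nhdsLT_mem_Ioo hlu)
      (fun x hx => (EReal.eventually_comap_coe_nhdsGT_mem_Ioo hx.1).mono fun t ht =>
        EReal.coe_le_coe_iff.mp ht.2.le)
      (fun x hx => (EReal.eventually_comap_coe_nhdsLT_mem_Ioo hx.2).mono fun t ht =>
        EReal.coe_le_coe_iff.mp ht.1.le)
      (fun x hx => (hddf x hx).hasDerivAt) hf''_int hf'_lim_l hf'_lim_u
  refine ⟨hzero ▸ integral_add_integral_eq_zero_of_ae_add_eq ?_ hf''_int hzero, hzero⟩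
  filter_upwards [ae_restrict_mem hopen.measurableSet] with x hx
  exact deriv_log_sq_mul_add_deriv_deriv_log_mul
    (eventually_of_mem (hopen.mem_nhds hx) hdf) (hddf x hx) (hf_pos x hx).ne'

/-- Theorem 4.1(ii) (second Bartlett identity in the random parameter): if the
density `f` is twice continuously differentiable and positive on the interval
`(l, u)` (endpoints allowed to be `±∞`), with `f`, `f'`, `f''` integrable,
`∫ f = 1`, and both `f` and `f'` vanishing in the limit at the endpoints, then
`∫ ((log f)')² f + ∫ (log f)'' f = ∫ f'' = 0`. -/
theorem second_bartlett_identity (l u : EReal) (hlu : l < u)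
    (S : Set ℝ) (hS : S = {x : ℝ | l < (x : EReal) ∧ (x : EReal) < u})
    (f : ℝ → ℝ)
    (hf_smooth : ContDiffOn ℝ 2 f S)
    (hf_pos : ∀ x ∈ S, 0 < f x)
    (hf_int : IntegrableOn f S)
    (hf'_int : IntegrableOn (deriv f) S)
    (hf''_int : IntegrableOn (deriv (deriv f)) S)
    (hf_one : (∫ x in S, f x) = 1)
    (hf_lim_l : Tendsto f (Filter.comap (fun x : ℝ => (x : EReal)) (𝓝[>] l)) (𝓝 (0 : ℝ)))
    (hf_lim_u : Tendsto f (Filter.comap (fun x : ℝ => (x : EReal)) (𝓝[<] u)) (𝓝 (0 : ℝ)))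
    (hf'_lim_l : Tendsto (deriv f)
      (Filter.comap (fun x : ℝ => (x : EReal)) (𝓝[>] l)) (𝓝 (0 : ℝ)))
    (hf'_lim_u : Tendsto (deriv f)
      (Filter.comap (fun x : ℝ => (x : EReal)) (𝓝[<] u)) (𝓝 (0 : ℝ))) :
    ((∫ b in S, (deriv (fun x => Real.log (f x)) b) ^ 2 * f b) +
        (∫ b in S, deriv (deriv (fun x => Real.log (f x))) b * f b))
      = (∫ b in S, deriv (deriv f) b) ∧
    (∫ b in S, deriv (deriv f) b) = 0 :=
  second_bartlett_identity_general l u hlu S hS f hf_smooth hf_pos hf''_int hf'_lim_l hf'_lim_u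
end

section
/- Fix integers q, n ≥ 1, reals μ ∈ ℝ, σ² > 0, λ² > 0, data y_{ij} ∈ ℝ (i = 1,…,q, j = 1,…,n), N = qn, ȳ_{i·} = n⁻¹ ∑_j y_{ij}. Define the transformed extended log-likelihood ℓ_e(θ, v) = -((N-q)/2) log(2πσ²) - (q/2) log(2π(σ² + nλ²)) - (1/(2σ²)) ∑_{i,j} ( y_{ij} - μ - (σ²λ²/(σ² + nλ²))^{1/2} v_i )² - (σ²/(2(σ² + nλ²))) ∑_i v_i² - (q/2) log 2π, and ṽ_i = n λ² (ȳ_{i·} - μ) / (σ² λ² (σ² + n λ²))^{1/2}. Then for all (μ, σ², λ²) with σ² > 0, λ² > 0: ℓ_e(θ, ṽ) = -((N-q)/2) log(2πσ²) - (q/2) log(2π(σ² + nλ²)) - (1/(2σ²)) ∑_{i,j} (y_{ij} - ȳ_{i·})² - ∑_i n (ȳ_{i·} - μ)² / (2(σ² + nλ²)) - (q/2) log 2π; that is, ℓ_e(θ, ṽ) differs from the marginal log-likelihood of the model (the sum over i of the log-density of N(μ𝟙, σ² I_n + λ² 𝟙𝟙ᵀ) at (y_{i1},…,y_{in})) by a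 constant not depending on (μ, σ², λ²). -/
/-!
With `A = σ² + nλ²` and `c = (σ²λ²/A)^{1/2}`, the mode gives `c ṽᵢ = nλ²(ȳᵢ - μ)/A`, the
conditional mean of `uᵢ`, while `σ²ṽᵢ²/(2A) = (c ṽᵢ)²/(2λ²)` is the usual penalty on `uᵢ`.
Splitting `∑ⱼ (yᵢⱼ - μ - c ṽᵢ)²` around the group mean `ȳᵢ`, the two terms in `ȳᵢ - μ` then
combine into `n(ȳᵢ - μ)²/(2A)`.
-/

open Finset

theorem Finset.sum_sub_sq_eq_sum_sub_mean_sq_add {ι K : Type*} [Field K] [CharZero K]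
    (s : Finset ι) (f : ι → K) (t : K) :
    ∑ j ∈ s, (f j - t) ^ 2 =
      ∑ j ∈ s, (f j - (∑ j ∈ s, f j) / #s) ^ 2 + #s * ((∑ j ∈ s, f j) / #s - t) ^ 2 := by
  set m := (∑ j ∈ s, f j) / #s
  have hdev : ∑ j ∈ s, (f j - m) = 0 := by
    rcases s.eq_empty_or_nonempty with rfl | hs
    · simp
    · rw [sum_sub_distrib, sum_const, nsmul_eq_mul, mul_div_cancel₀ _ (by simpa using hs.ne_empty)]
      exact sub_self _
  calc ∑ j ∈ s, (f j - t) ^ 2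
      = ∑ j ∈ s, ((f j - m) ^ 2 + 2 * (m - t) * (f j - m) + (m - t) ^ 2) :=
        sum_congr rfl fun j _ => by ring
    _ = _ := by simp only [sum_add_distrib, ← mul_sum, hdev, sum_const, nsmul_eq_mul]; ring

theorem Real.sqrt_div_mul_div_sqrt_mul {a A : ℝ} (ha : 0 < a) (hA : 0 < A) (x : ℝ) :
    √(a / A) * (x / √(a * A)) = x / A := by
  rw [Real.sqrt_div ha.le, Real.sqrt_mul ha.le]
  have : √a ≠ 0 := (Real.sqrt_pos.2 ha).ne'
  field_simp
  rw [Real.sq_sqrt hA.le, mul_comm]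

theorem sum_sq_add_penalty_at_mode {ι : Type*} (s : Finset ι) (y : ι → ℝ) (μ σ2 lam2 : ℝ)
    (hσ2 : 0 < σ2) (hlam2 : 0 < lam2) (m : ℝ) (hm : m = (∑ j ∈ s, y j) / #s) (v : ℝ)
    (hv : v = #s * lam2 * (m - μ) / √(σ2 * lam2 * (σ2 + #s * lam2))) :
    1 / (2 * σ2) * ∑ j ∈ s, (y j - μ - √(σ2 * lam2 / (σ2 + #s * lam2)) * v) ^ 2
        + σ2 / (2 * (σ2 + #s * lam2)) * v ^ 2
      = 1 / (2 * σ2) * ∑ j ∈ s, (y j - m) ^ 2 + #s * (m - μ) ^ 2 / (2 * (σ2 + #s * lam2)) := by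
  have hA : 0 < σ2 + #s * lam2 := by positivity
  have hu : √(σ2 * lam2 / (σ2 + #s * lam2)) * v = #s * lam2 * (m - μ) / (σ2 + #s * lam2) := by
    rw [hv, Real.sqrt_div_mul_div_sqrt_mul (by positivity) hA]
  have hv2 : v ^ 2 = (#s * lam2 * (m - μ)) ^ 2 / (σ2 * lam2 * (σ2 + #s * lam2)) := by
    rw [hv, div_pow, Real.sq_sqrt (by positivity)]
  simp only [sub_sub _ μ, hu]
  rw [sum_sub_sq_eq_sum_sub_mean_sq_add s y, ← hm, hv2]
  field_simp
  ring

theorem mixed_model_canonical_identity_general (q n : ℕ)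
    (μ σ2 lam2 : ℝ) (hσ2 : 0 < σ2) (hlam2 : 0 < lam2)
    (y : Fin q → Fin n → ℝ)
    (ybar : Fin q → ℝ) (hybar : ∀ i, ybar i = (∑ j : Fin n, y i j) / (n : ℝ))
    (N : ℕ)
    (ℓe : (Fin q → ℝ) → ℝ)
    (hdef : ∀ v : Fin q → ℝ, ℓe v =
      -(((N : ℝ) - q) / 2) * Real.log (2 * Real.pi * σ2)
      - ((q : ℝ) / 2) * Real.log (2 * Real.pi * (σ2 + (n : ℝ) * lam2))
      - (1 / (2 * σ2)) * ∑ i : Fin q, ∑ j : Fin n,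
          (y i j - μ - Real.sqrt (σ2 * lam2 / (σ2 + (n : ℝ) * lam2)) * v i) ^ 2
      - (σ2 / (2 * (σ2 + (n : ℝ) * lam2))) * ∑ i : Fin q, (v i) ^ 2
      - ((q : ℝ) / 2) * Real.log (2 * Real.pi))
    (vtil : Fin q → ℝ)
    (hvtil : ∀ i, vtil i =
      (n : ℝ) * lam2 * (ybar i - μ) / Real.sqrt (σ2 * lam2 * (σ2 + (n : ℝ) * lam2))) :
    ℓe vtil =
      -(((N : ℝ) - q) / 2) * Real.log (2 * Real.pi * σ2)
      - ((q : ℝ) / 2) * Real.log (2 * Real.pi * (σ2 + (n : ℝ) * lam2))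
      - (1 / (2 * σ2)) * ∑ i : Fin q, ∑ j : Fin n, (y i j - ybar i) ^ 2
      - (∑ i : Fin q, (n : ℝ) * (ybar i - μ) ^ 2 / (2 * (σ2 + (n : ℝ) * lam2)))
      - ((q : ℝ) / 2) * Real.log (2 * Real.pi) := by
  have hgroup (i : Fin q) := sum_sq_add_penalty_at_mode univ (y i) μ σ2 lam2 hσ2 hlam2
    (ybar i) (by simpa using hybar i) (vtil i) (by simpa using hvtil i)
  simp only [card_univ, Fintype.card_fin] at hgroup
  have hsum := sum_congr rfl fun i (_ : i ∈ univ) => hgroup i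
  simp only [sum_add_distrib, ← mul_sum] at hsum
  rw [hdef]
  linarith

/-- Example 3.2 (canonical property in the one-way mixed model): evaluating the
transformed extended log-likelihood `ℓ_e(θ, v)` at the mode
`ṽ_i = nλ²(ȳ_{i·} - μ)/(σ²λ²(σ² + nλ²))^{1/2}` yields the marginal
log-likelihood expression (up to a θ-free constant), so the scale
`v_i = ((σ² + nλ²)/(σ²λ²))^{1/2} u_i` forms an h-likelihood. -/
theorem mixed_model_canonical_identity (q n : ℕ) (hq : 1 ≤ q) (hn : 1 ≤ n)
    (μ σ2 lam2 : ℝ) (hσ2 : 0 < σ2) (hlam2 : 0 < lam2)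
    (y : Fin q → Fin n → ℝ)
    (ybar : Fin q → ℝ) (hybar : ∀ i, ybar i = (∑ j : Fin n, y i j) / (n : ℝ))
    (N : ℕ) (hN : N = q * n)
    (ℓe : (Fin q → ℝ) → ℝ)
    (hdef : ∀ v : Fin q → ℝ, ℓe v =
      -(((N : ℝ) - q) / 2) * Real.log (2 * Real.pi * σ2)
      - ((q : ℝ) / 2) * Real.log (2 * Real.pi * (σ2 + (n : ℝ) * lam2))
      - (1 / (2 * σ2)) * ∑ i : Fin q, ∑ j : Fin n,
          (y i j - μ - Real.sqrt (σ2 * lam2 / (σ2 + (n : ℝ) * lam2)) * v i) ^ 2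
      - (σ2 / (2 * (σ2 + (n : ℝ) * lam2))) * ∑ i : Fin q, (v i) ^ 2
      - ((q : ℝ) / 2) * Real.log (2 * Real.pi))
    (vtil : Fin q → ℝ)
    (hvtil : ∀ i, vtil i =
      (n : ℝ) * lam2 * (ybar i - μ) / Real.sqrt (σ2 * lam2 * (σ2 + (n : ℝ) * lam2))) :
    ℓe vtil =
      -(((N : ℝ) - q) / 2) * Real.log (2 * Real.pi * σ2)
      - ((q : ℝ) / 2) * Real.log (2 * Real.pi * (σ2 + (n : ℝ) * lam2))
      - (1 / (2 * σ2)) * ∑ i : Fin q, ∑ j : Fin n, (y i j - ybar i) ^ 2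
      - (∑ i : Fin q, (n : ℝ) * (ybar i - μ) ^ 2 / (2 * (σ2 + (n : ℝ) * lam2)))
      - ((q : ℝ) / 2) * Real.log (2 * Real.pi) :=
  mixed_model_canonical_identity_general q n μ σ2 lam2 hσ2 hlam2 y ybar hybar N ℓe hdef vtil hvtil
end

section
/- Fix integers n_obs ≥ 1 and n_mis ≥ 1, n = n_obs + n_mis, observed values y_1,…,y_{n_obs} > 0 and c > 0. Define the h-likelihood h(θ, v) = -n log θ - (∑_{i=1}^{n_obs} y_i)/θ + ∑_{j=1}^{n_mis} ( -(c + e^{v_j})/θ + v_j ) for θ > 0 and v ∈ ℝ^{n_mis}. Then: (i) for each fixed θ > 0, v ↦ h(θ, v) has unique global maximizer ṽ(θ) with ṽ_j(θ) = log θ for all j; (ii) for all θ > 0, h(θ, ṽ(θ)) = -n_obs log θ - (∑_{i=1}^{n_obs} y_i + n_mis c)/θ - n_mis = ℓ_m(θ) - n_mis, where ℓ_m(θ) = -n_obs log θ - (∑ y_i + n_mis c)/θ is the marginal log-likelihood; and (iii) ℓ_m has unique global maximizer over θ > 0 at θ̂ = ȳ_obs + n_mis c / n_obs, with ȳ_obs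 = n_obs⁻¹ ∑_{i=1}^{n_obs} y_i. -/
/-!
Both maximisations are the inequality `log x < x - 1` for `x ≠ 1`: applied to
`x = exp v_j / θ` it shows that each summand `-(c + exp v_j)/θ + v_j` of the h-likelihood is
uniquely maximised at `v_j = log θ`, and applied to `x = θ̂ / θ` it shows that
`ℓ_m(θ) = -n_obs (log θ + θ̂ / θ)` is uniquely maximised at `θ = θ̂`.
-/

open Real Finset

theorem Finset.sum_comp_lt_sum_const_of_ne {ι α M : Type*} [Fintype ι] [AddCommMonoid M]
    [PartialOrder M] [IsOrderedCancelAddMonoid M] {f : α → M} {x₀ : α}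
    (hf : ∀ x, x ≠ x₀ → f x < f x₀) {v : ι → α} (hv : v ≠ fun _ => x₀) :
    ∑ i, f (v i) < ∑ _i : ι, f x₀ := by
  obtain ⟨i₀, hi₀⟩ := Function.ne_iff.mp hv
  refine Finset.sum_lt_sum (fun i _ => ?_) ⟨i₀, mem_univ i₀, hf _ hi₀⟩
  obtain hvi | hvi := eq_or_ne (v i) x₀
  · rw [hvi]
  · exact (hf _ hvi).le

theorem Real.log_sub_log_lt_div_sub_one {a b : ℝ} (ha : 0 < a) (hb : 0 < b) (hab : a ≠ b) :
    log a - log b < a / b - 1 := by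
  rw [← log_div ha.ne' hb.ne']
  exact log_lt_sub_one_of_pos (div_pos ha hb) (div_ne_one_of_ne hab)

theorem neg_exp_div_add_lt_of_ne_log {c θ v : ℝ} (hθ : 0 < θ) (hv : v ≠ log θ) :
    -(c + exp v) / θ + v < -(c + exp (log θ)) / θ + log θ := by
  have key := log_sub_log_lt_div_sub_one (exp_pos v) hθ fun h => hv (by rw [← h, log_exp])
  rw [log_exp] at key
  have hsplit : -(c + exp v) / θ = -c / θ - exp v / θ := by ring
  have hsplit_log : -(c + θ) / θ = -c / θ - 1 := by field_simp; ring
  rw [exp_log hθ, hsplit, hsplit_log]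
  linarith

theorem neg_mul_log_sub_div_lt_of_ne {n A θ : ℝ} (hn : 0 < n) (hA : 0 < A) (hθ : 0 < θ)
    (hne : θ ≠ A / n) :
    -n * log θ - A / θ < -n * log (A / n) - A / (A / n) := by
  have key := mul_lt_mul_of_pos_left
    (log_sub_log_lt_div_sub_one (div_pos hA hn) hθ (Ne.symm hne)) hn
  have hdiv : A / θ = n * (A / n / θ) := by field_simp
  have hdiv_hat : A / (A / n) = n := by field_simp
  rw [hdiv, hdiv_hat]
  linarith

theorem censored_exponential_hlik_general (nobs nmis : ℕ)
    (h1 : 1 ≤ nobs)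
    (y : Fin nobs → ℝ) (hy : ∀ i, 0 < y i) (c : ℝ) (hc : 0 < c)
    (h : ℝ → (Fin nmis → ℝ) → ℝ)
    (hdef : ∀ θ : ℝ, ∀ v : Fin nmis → ℝ, h θ v =
      -((nobs + nmis : ℕ) : ℝ) * Real.log θ - (∑ i, y i) / θ +
        ∑ j, (-(c + Real.exp (v j)) / θ + v j))
    (ℓm : ℝ → ℝ)
    (hℓm : ∀ θ : ℝ, ℓm θ =
      -(nobs : ℝ) * Real.log θ - ((∑ i, y i) + (nmis : ℝ) * c) / θ) :
    (∀ θ : ℝ, 0 < θ → ∀ v : Fin nmis → ℝ,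
      v ≠ (fun _ => Real.log θ) → h θ v < h θ (fun _ => Real.log θ)) ∧
    (∀ θ : ℝ, 0 < θ → h θ (fun _ => Real.log θ) = ℓm θ - (nmis : ℝ)) ∧
    (∀ θ : ℝ, 0 < θ → θ ≠ (∑ i, y i) / (nobs : ℝ) + (nmis : ℝ) * c / (nobs : ℝ) →
      ℓm θ < ℓm ((∑ i, y i) / (nobs : ℝ) + (nmis : ℝ) * c / (nobs : ℝ))) := by
  refine ⟨fun θ hθ v hv => ?_, fun θ hθ => ?_, fun θ hθ hne => ?_⟩
  · rw [hdef, hdef]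
    exact (add_lt_add_iff_left _).2 <|
      sum_comp_lt_sum_const_of_ne (f := fun w => -(c + exp w) / θ + w)
        (fun w hw => neg_exp_div_add_lt_of_ne_log hθ hw) hv
  · rw [hdef, hℓm, exp_log hθ, sum_const, card_univ, Fintype.card_fin, nsmul_eq_mul]
    push_cast
    field_simp
    ring
  · have hn : (0 : ℝ) < nobs := by exact_mod_cast h1
    have hsum : 0 < ∑ i, y i := sum_pos (fun i _ => hy i) ⟨⟨0, h1⟩, mem_univ _⟩
    have hA : 0 < (∑ i, y i) + (nmis : ℝ) * c :=
      add_pos_of_pos_of_nonneg hsum (mul_nonneg nmis.cast_nonneg hc.le)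
    rw [← add_div] at hne ⊢
    rw [hℓm, hℓm]
    exact neg_mul_log_sub_div_lt_of_ne hn hA hθ hne

/-- Example 5.1 (censored exponential model, h-likelihood on the canonical
scale `v_j = log(y_{mis,j} - c)`): (i) for fixed `θ > 0` the h-likelihood has
unique maximizer `ṽ_j(θ) = log θ`; (ii) its value there equals the marginal
log-likelihood `ℓ_m(θ) = -n_obs log θ - (∑ y_i + n_mis c)/θ` minus `n_mis`;
(iii) `ℓ_m` has unique global maximizer `θ̂ = ȳ_obs + n_mis c / n_obs`. -/
theorem censored_exponential_hlik (nobs nmis : ℕ)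
    (h1 : 1 ≤ nobs) (h2 : 1 ≤ nmis)
    (y : Fin nobs → ℝ) (hy : ∀ i, 0 < y i) (c : ℝ) (hc : 0 < c)
    (h : ℝ → (Fin nmis → ℝ) → ℝ)
    (hdef : ∀ θ : ℝ, ∀ v : Fin nmis → ℝ, h θ v =
      -((nobs + nmis : ℕ) : ℝ) * Real.log θ - (∑ i, y i) / θ +
        ∑ j, (-(c + Real.exp (v j)) / θ + v j))
    (ℓm : ℝ → ℝ)
    (hℓm : ∀ θ : ℝ, ℓm θ =
      -(nobs : ℝ) * Real.log θ - ((∑ i, y i) + (nmis : ℝ) * c) / θ) :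
    (∀ θ : ℝ, 0 < θ → ∀ v : Fin nmis → ℝ,
      v ≠ (fun _ => Real.log θ) → h θ v < h θ (fun _ => Real.log θ)) ∧
    (∀ θ : ℝ, 0 < θ → h θ (fun _ => Real.log θ) = ℓm θ - (nmis : ℝ)) ∧
    (∀ θ : ℝ, 0 < θ → θ ≠ (∑ i, y i) / (nobs : ℝ) + (nmis : ℝ) * c / (nobs : ℝ) →
      ℓm θ < ℓm ((∑ i, y i) / (nobs : ℝ) + (nmis : ℝ) * c / (nobs : ℝ))) :=
  censored_exponential_hlik_general nobs nmis h1 y hy c hc h hdef ℓm hℓm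
end
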